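/- The number of good external edges whose colour lies in F is at least ε|F|n/4. -/

import Mathlib

/-
A multigraph on vertex type `V` is given by an edge type `E` with two endpoint
maps `fst snd : E → V` (no loops: `fst e ≠ snd e`); parallel edges are allowed
since distinct elements of `E` may have the same endpoints.  A colouring
`col : E → C` by a set `C` of `n` colours is proper if any two distinct edges
sharing a vertex get distinct colours.
-/

attribute [local instance] Classical.propDecidable

/-- The set of endpoints of an edge. -/
def endpts {V E : Type*} [DecidableEq V] (fst snd : E → V) (e : E) : Finset V :=
  {fst e, snd e}

/-- A set of edges is a rainbow matching: pairwise vertex-disjoint edges with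
pairwise distinct colours. -/
def IsRainbowMatching {V E C : Type*} [DecidableEq V] (fst snd : E → V) (col : E → C)
    (S : Finset E) : Prop :=
  (∀ e ∈ S, ∀ f ∈ S, e ≠ f → endpts fst snd e ∩ endpts fst snd f = ∅) ∧
  (∀ e ∈ S, ∀ f ∈ S, col e = col f → e = f)

/-- `V(M)`: the set of vertices covered by a set of edges `M`. -/
def mVerts {V E : Type*} [DecidableEq V] (fst snd : E → V) (M : Finset E) : Finset V :=
  M.biUnion (endpts fst snd)

/-- The set of colours used by a set of edges `M`. -/
def mCols {E C : Type*} [DecidableEq C] (col : E → C) (M : Finset E) : Finset C :=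
  M.image col

/-- `C₀`: the set of colours not used by `M`. -/
def C0 {E C : Type*} [Fintype C] [DecidableEq C] (col : E → C) (M : Finset E) : Finset C :=
  Finset.univ \ mCols col M

/-- An edge is external if one endpoint is in `V(M)` and the other is outside `V(M)`. -/
def IsExternal {V E : Type*} [DecidableEq V] (fst snd : E → V) (M : Finset E) (e : E) : Prop :=
  (fst e ∈ mVerts fst snd M ∧ snd e ∉ mVerts fst snd M) ∨
  (fst e ∉ mVerts fst snd M ∧ snd e ∈ mVerts fst snd M)

/-- The number of external `C₀`-edges incident to a vertex `v`. -/
noncomputable def extC0deg {V E C : Type*} [DecidableEq V] [Fintype E] [Fintype C]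
    [DecidableEq C] (fst snd : E → V) (col : E → C) (M : Finset E) (v : V) : ℕ :=
  (Finset.univ.filter fun f : E =>
    IsExternal fst snd M f ∧ col f ∈ C0 col M ∧ v ∈ endpts fst snd f).card

/-- `E₀`: the edges of `M` having an endpoint (a possible tail) incident to at least
`α|C₀|` external `C₀`-edges. -/
noncomputable def E0 {V E C : Type*} [DecidableEq V] [Fintype E] [Fintype C] [DecidableEq C]
    (fst snd : E → V) (col : E → C) (M : Finset E) (α : ℝ) : Finset E :=
  M.filter fun e => ∃ v ∈ endpts fst snd e,
    α * ((C0 col M).card : ℝ) ≤ (extC0deg fst snd col M v : ℝ)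

/-- `F`: the set of flexible colours, i.e. the colours of the edges of `E₀`. -/
noncomputable def Fcols {V E C : Type*} [DecidableEq V] [Fintype E] [Fintype C] [DecidableEq C]
    (fst snd : E → V) (col : E → C) (M : Finset E) (α : ℝ) : Finset C :=
  mCols col (E0 fst snd col M α)

/-- A good external edge: an external edge `e` whose colour lies in `F` such that the
edge `m_{c(e)}` of `M` of the same colour is incident to at least `α|C₀|/2` external
`C₀`-edges sharing no endpoint with `e`. -/
noncomputable def IsGood {V E C : Type*} [DecidableEq V] [Fintype E] [Fintype C] [DecidableEq C]
    (fst snd : E → V) (col : E → C) (M : Finset E) (α : ℝ) (e : E) : Prop :=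
  IsExternal fst snd M e ∧ col e ∈ Fcols fst snd col M α ∧
  ∃ g ∈ M, col g = col e ∧
    α * ((C0 col M).card : ℝ) / 2 ≤
      ((Finset.univ.filter fun f : E => IsExternal fst snd M f ∧ col f ∈ C0 col M ∧
        (endpts fst snd f ∩ endpts fst snd g).Nonempty ∧
        endpts fst snd f ∩ endpts fst snd e = ∅).card : ℝ)

/-- The number of good external `F`-edges incident to a vertex `v`. -/
noncomputable def goodDeg {V E C : Type*} [DecidableEq V] [Fintype E] [Fintype C] [DecidableEq C]
    (fst snd : E → V) (col : E → C) (M : Finset E) (α : ℝ) (v : V) : ℕ :=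
  (Finset.univ.filter fun f : E => IsGood fst snd col M α f ∧ v ∈ endpts fst snd f).card

/-- `E₁`: the edges of `M` having an endpoint (a possible tail) incident to at least
`α|F|` good external `F`-edges. -/
noncomputable def E1 {V E C : Type*} [DecidableEq V] [Fintype E] [Fintype C] [DecidableEq C]
    (fst snd : E → V) (col : E → C) (M : Finset E) (α : ℝ) : Finset E :=
  M.filter fun e => ∃ v ∈ endpts fst snd e,
    α * ((Fcols fst snd col M α).card : ℝ) ≤ (goodDeg fst snd col M α v : ℝ)

/-- Given a choice `tl` of tail for each edge, the corresponding head. -/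
def hdOf {V E : Type*} [DecidableEq V] (fst snd : E → V) (tl : E → V) (e : E) : V :=
  if tl e = fst e then snd e else fst e

/-- The endpoint of the edge `f` other than `v` (for `v` an endpoint of `f`). -/
def other {V E : Type*} [DecidableEq V] (fst snd : E → V) (v : V) (f : E) : V :=
  if fst f = v then snd f else fst f

/-- The condition for a vertex `v` to be a possible tail at step `i > 1` of the
reachability algorithm: for some `0 < j < i`, the number of `R_j`-edges `v u` with
`u ∈ V₀ ∪ V₁ ∪ ⋯ ∪ V_{i-1}` is at least `α|R_j|`. -/
noncomputable def reachCond {V E C : Type*} [DecidableEq V] [Fintype V] [Fintype E] [Fintype C]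
    [DecidableEq C] (fst snd : E → V) (col : E → C) (M : Finset E)
    (Vs : ℕ → Finset V) (Rs : ℕ → Finset C) (α : ℝ) (i : ℕ) (v : V) : Prop :=
  ∃ j ∈ Finset.Ioo 0 i, α * ((Rs j).card : ℝ) ≤
    ((Finset.univ.filter fun f : E => v ∈ endpts fst snd f ∧ col f ∈ Rs j ∧
      other fst snd v f ∈ (Finset.univ \ mVerts fst snd M) ∪ (Finset.Ioo 0 i).biUnion Vs).card : ℝ)

/-- The set `T(S)` of twins (matching partners under `M`) of the vertices of `S`. -/
def twins {V E : Type*} [DecidableEq V] (fst snd : E → V) (M : Finset E) (S : Finset V) :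
    Finset V :=
  M.biUnion fun g => (if fst g ∈ S then {snd g} else ∅) ∪ (if snd g ∈ S then {fst g} else ∅)

/-
Fix a flexible colour `c`, let `g = m_c` with tail `t`, and sort the edges of colour `c`, which
form a matching of at least `(1+ε)n` edges. At most `|M|` of them lie inside `V(M)` and at most
one contains `t`. At most one lies inside `V₀`, since replacing `g` by such an edge avoiding the
`V₀`-end `w` of an external `C₀`-edge `tw`, and by `tw`, would enlarge `M`. A bad edge avoiding
`t` meets more than `α|C₀|/2` of the at most `|C₀|` external `C₀`-edges at `t`, and each of
those meets at most one edge of colour `c`, so there are at most `2/α` such edges. The remaining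
at least `εn + k - 2 - 2/α ≥ εn` edges of colour `c` are good.
-/

open Finset

def IsProperColouring {V E C : Type*} [DecidableEq V] (fst snd : E → V) (col : E → C) : Prop :=
  ∀ e f : E, e ≠ f → (endpts fst snd e ∩ endpts fst snd f).Nonempty → col e ≠ col f

def IsMaximumRainbowMatching {V E C : Type*} [DecidableEq V] (fst snd : E → V) (col : E → C)
    (M : Finset E) : Prop :=
  IsRainbowMatching fst snd col M ∧
    ∀ S : Finset E, IsRainbowMatching fst snd col S → #S ≤ #M

noncomputable def extC0Edges {V E C : Type*} [DecidableEq V] [Fintype E] [Fintype C]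
    [DecidableEq C] (fst snd : E → V) (col : E → C) (M : Finset E) (v : V) : Finset E :=
  univ.filter fun f : E => IsExternal fst snd M f ∧ col f ∈ C0 col M ∧ v ∈ endpts fst snd f

theorem two_add_mul_le_two_rpow {x : ℝ} (hx : 4 ≤ x) : 2 + 6 / 5 * x ≤ (2 : ℝ) ^ x := by
  have hexp := Real.quadratic_le_exp_of_nonneg (x := Real.log 2 * x) (by positivity)
  have hlog := Real.log_two_gt_d9
  have hlx : 0.69 * x ≤ Real.log 2 * x := by nlinarith
  have hsq : (0.69 * x) ^ 2 ≤ (Real.log 2 * x) ^ 2 := pow_le_pow_left₀ (by positivity) hlx 2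
  rw [Real.rpow_def_of_pos two_pos]
  nlinarith

theorem card_le_card_C0_add_card {E C : Type*} [Fintype C] [DecidableEq C] (col : E → C)
    (M : Finset E) :
    Fintype.card C ≤ #(C0 col M) + #M := by
  have h1 : #(C0 col M) = Fintype.card C - #(mCols col M) := card_univ_sdiff _
  have h2 : #(mCols col M) ≤ #M := card_image_le
  have h3 : #(mCols col M) ≤ Fintype.card C := card_le_univ _
  omega

section Multigraph

variable {V E C : Type*} [DecidableEq V] {fst snd : E → V} {col : E → C}

theorem mem_endpts {e : E} {v : V} : v ∈ endpts fst snd e ↔ v = fst e ∨ v = snd e := by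
  simp [endpts]

theorem eq_of_mem_endpts_of_ne {f : E} {t v v' : V} (ht : t ∈ endpts fst snd f)
    (hv : v ∈ endpts fst snd f) (hv' : v' ∈ endpts fst snd f) (hvt : v ≠ t)
    (hv't : v' ≠ t) : v = v' := by
  rw [mem_endpts] at ht hv hv'
  grind

theorem endpts_subset_mVerts {M : Finset E} {g : E} (hg : g ∈ M) :
    endpts fst snd g ⊆ mVerts fst snd M :=
  subset_biUnion_of_mem _ hg

theorem card_mVerts_le (M : Finset E) : #(mVerts fst snd M) ≤ 2 * #M :=
  (card_biUnion_le_card_mul _ _ _ fun _ _ => card_le_two).trans_eq (mul_comm _ _)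

theorem two_mul_card_le_of_pairwiseDisjoint (hloop : ∀ e : E, fst e ≠ snd e) {S : Finset E}
    {W : Finset V} (hS : (S : Set E).PairwiseDisjoint (endpts fst snd))
    (hW : ∀ e ∈ S, endpts fst snd e ⊆ W) : 2 * #S ≤ #W :=
  calc 2 * #S = ∑ e ∈ S, #(endpts fst snd e) := by
        rw [sum_congr rfl fun e _ => show #(endpts fst snd e) = 2 from card_pair (hloop e),
          sum_const, smul_eq_mul, mul_comm]
    _ = #(S.biUnion (endpts fst snd)) := (card_biUnion hS).symm
    _ ≤ #W := card_le_card (biUnion_subset.2 hW)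

theorem IsExternal.exists_endpts_eq {M : Finset E} {f : E} {t : V}
    (hf : IsExternal fst snd M f) (htf : t ∈ endpts fst snd f) (htM : t ∈ mVerts fst snd M) :
    ∃ w ∉ mVerts fst snd M, endpts fst snd f = {t, w} := by
  rcases mem_endpts.1 htf with rfl | rfl <;> rcases hf with ⟨h1, h2⟩ | ⟨h1, h2⟩
  · exact ⟨snd f, h2, rfl⟩
  · exact absurd htM h1
  · exact absurd htM h2
  · exact ⟨fst f, h1, pair_comm _ _⟩

theorem subset_or_disjoint_of_not_isExternal {M : Finset E} {e : E}
    (he : ¬ IsExternal fst snd M e) :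
    endpts fst snd e ⊆ mVerts fst snd M ∨ Disjoint (endpts fst snd e) (mVerts fst snd M) := by
  simp only [IsExternal, endpts, insert_subset_iff, singleton_subset_iff, disjoint_insert_left,
    disjoint_singleton_left] at he ⊢
  tauto

theorem IsProperColouring.eq_of_mem_endpts (h : IsProperColouring fst snd col) {e f : E} {v : V}
    (hcol : col e = col f) (he : v ∈ endpts fst snd e) (hf : v ∈ endpts fst snd f) : e = f := by
  by_contra hne
  exact h e f hne ⟨v, mem_inter.2 ⟨he, hf⟩⟩ hcol

theorem IsProperColouring.pairwiseDisjoint (h : IsProperColouring fst snd col) (c : C) :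
    {e | col e = c}.PairwiseDisjoint (endpts fst snd) := fun _ he _ hf hne =>
  disjoint_left.2 fun _ hve hvf => hne (h.eq_of_mem_endpts (he.trans hf.symm) hve hvf)

theorem IsProperColouring.card_le_one (h : IsProperColouring fst snd col) {S : Finset E} {c : C}
    {v : V} (hS : ∀ e ∈ S, col e = c ∧ v ∈ endpts fst snd e) : #S ≤ 1 :=
  Finset.card_le_one.2 fun e he f hf =>
    h.eq_of_mem_endpts ((hS e he).1.trans (hS f hf).1.symm) (hS e he).2 (hS f hf).2

theorem IsProperColouring.card_le_card_of_subset_mVerts (h : IsProperColouring fst snd col)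
    (hloop : ∀ e : E, fst e ≠ snd e) {M S : Finset E} {c : C}
    (hS : ∀ e ∈ S, col e = c ∧ endpts fst snd e ⊆ mVerts fst snd M) : #S ≤ #M := by
  have hdisj : (S : Set E).PairwiseDisjoint (endpts fst snd) :=
    (h.pairwiseDisjoint c).subset fun e he => (hS e he).1
  have := two_mul_card_le_of_pairwiseDisjoint hloop hdisj fun e he => (hS e he).2
  have := card_mVerts_le (fst := fst) (snd := snd) M
  omega

theorem IsRainbowMatching.mono {S T : Finset E} (hT : IsRainbowMatching fst snd col T)
    (hST : S ⊆ T) : IsRainbowMatching fst snd col S :=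
  ⟨fun e he f hf => hT.1 e (hST he) f (hST hf), fun e he f hf => hT.2 e (hST he) f (hST hf)⟩

theorem IsRainbowMatching.insert_of_forall {S : Finset E} {e : E}
    (hS : IsRainbowMatching fst snd col S)
    (hdisj : ∀ f ∈ S, endpts fst snd e ∩ endpts fst snd f = ∅)
    (hcol : ∀ f ∈ S, col f ≠ col e) : IsRainbowMatching fst snd col (insert e S) := by
  refine ⟨?_, ?_⟩ <;> simp only [mem_insert] <;> rintro a (rfl | ha) b (rfl | hb) hab
  · exact absurd rfl hab
  · exact hdisj b hb
  · rw [inter_comm]; exact hdisj a ha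
  · exact hS.1 a ha b hb hab
  · rfl
  · exact absurd hab.symm (hcol b hb)
  · exact absurd hab (hcol a ha)
  · exact hS.2 a ha b hb hab

variable [DecidableEq C]

theorem IsRainbowMatching.swap {M : Finset E} {g e f : E} {t w : V}
    (hM : IsRainbowMatching fst snd col M) (hg : g ∈ M) (htg : t ∈ endpts fst snd g)
    (hce : col e = col g) (he : Disjoint (endpts fst snd e) (mVerts fst snd M))
    (hf : endpts fst snd f = {t, w}) (hw : w ∉ mVerts fst snd M) (hwe : w ∉ endpts fst snd e)
    (hcf : col f ∉ mCols col M) :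
    IsRainbowMatching fst snd col (insert e (insert f (M.erase g))) ∧
      #(insert e (insert f (M.erase g))) = #M + 1 := by
  have hcolM : ∀ m ∈ M, col m ≠ col f := fun m hm h => hcf (h ▸ mem_image_of_mem col hm)
  have hfdisj : ∀ m ∈ M.erase g, endpts fst snd f ∩ endpts fst snd m = ∅ := by
    intro m hm
    obtain ⟨hmg, hm⟩ := mem_erase.1 hm
    refine eq_empty_of_forall_notMem fun v hv => ?_
    rw [mem_inter, hf, mem_insert, mem_singleton] at hv
    rcases hv with ⟨rfl | rfl, hvm⟩
    · exact notMem_empty v (hM.1 g hg m hm (Ne.symm hmg) ▸ mem_inter.2 ⟨htg, hvm⟩)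
    · exact hw (endpts_subset_mVerts hm hvm)
  have hedisj : ∀ x ∈ insert f (M.erase g), endpts fst snd e ∩ endpts fst snd x = ∅ := by
    intro x hx
    refine eq_empty_of_forall_notMem fun v hv => ?_
    rw [mem_inter] at hv
    rcases mem_insert.1 hx with rfl | hx
    · rw [hf, mem_insert, mem_singleton] at hv
      rcases hv with ⟨hve, rfl | rfl⟩
      · exact disjoint_left.1 he hve (endpts_subset_mVerts hg htg)
      · exact hwe hve
    · exact disjoint_left.1 he hv.1 (endpts_subset_mVerts (mem_of_mem_erase hx) hv.2)
  have hecol : ∀ x ∈ insert f (M.erase g), col x ≠ col e := by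
    intro x hx
    rw [hce]
    rcases mem_insert.1 hx with rfl | hx
    · exact (hcolM g hg).symm
    · obtain ⟨hxg, hxM⟩ := mem_erase.1 hx
      exact fun h => hxg (hM.2 x hxM g hg h)
  refine ⟨((hM.mono (erase_subset g M)).insert_of_forall hfdisj
    fun m hm => hcolM m (mem_of_mem_erase hm)).insert_of_forall hedisj hecol, ?_⟩
  rw [card_insert_of_notMem fun h => hecol e h rfl,
    card_insert_of_notMem fun h => hcolM f (mem_of_mem_erase h) rfl, card_erase_add_one hg]

theorem IsMaximumRainbowMatching.mem_endpts_of_disjoint_mVerts {M : Finset E} {g e f : E}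
    {t w : V}
    (hM : IsMaximumRainbowMatching fst snd col M) (hg : g ∈ M) (htg : t ∈ endpts fst snd g)
    (hce : col e = col g) (he : Disjoint (endpts fst snd e) (mVerts fst snd M))
    (hf : endpts fst snd f = {t, w}) (hw : w ∉ mVerts fst snd M)
    (hcf : col f ∉ mCols col M) : w ∈ endpts fst snd e := by
  by_contra hwe
  obtain ⟨hS, hcard⟩ := hM.1.swap hg htg hce he hf hw hwe hcf
  have := hM.2 _ hS
  omega

variable [Fintype E] [Fintype C]

theorem IsProperColouring.card_extC0Edges_le (h : IsProperColouring fst snd col)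
    (M : Finset E) (t : V) : #(extC0Edges fst snd col M t) ≤ #(C0 col M) :=
  card_le_card_of_injOn col (fun _ hf => (mem_filter.1 hf).2.2.1)
    fun _ hf _ hf' hcol =>
      h.eq_of_mem_endpts hcol (mem_filter.1 hf).2.2.2 (mem_filter.1 hf').2.2.2

theorem IsMaximumRainbowMatching.card_le_one_of_disjoint_mVerts {M : Finset E}
    (hM : IsMaximumRainbowMatching fst snd col M) (hproper : IsProperColouring fst snd col)
    {g f : E} {t : V} (hg : g ∈ M) (htg : t ∈ endpts fst snd g)
    (hf : f ∈ extC0Edges fst snd col M t) {S : Finset E}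
    (hS : ∀ e ∈ S, col e = col g ∧ Disjoint (endpts fst snd e) (mVerts fst snd M)) :
    #S ≤ 1 := by
  obtain ⟨hfext, hfC0, htf⟩ := (mem_filter.1 hf).2
  obtain ⟨w, hw, hfw⟩ := hfext.exists_endpts_eq htf (endpts_subset_mVerts hg htg)
  exact hproper.card_le_one fun e he =>
    ⟨(hS e he).1, hM.mem_endpts_of_disjoint_mVerts hg htg (hS e he).1 (hS e he).2 hfw hw
      (mem_sdiff.1 hfC0).2⟩

theorem lt_card_filter_of_not_isGood {α : ℝ} {M : Finset E} {g e : E} {t : V} (hg : g ∈ M)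
    (htg : t ∈ endpts fst snd g) (hce : col g = col e)
    (hdeg : α * #(C0 col M) ≤ extC0deg fst snd col M t) (he : IsExternal fst snd M e)
    (heF : col e ∈ Fcols fst snd col M α) (hbad : ¬ IsGood fst snd col M α e) :
    α * #(C0 col M) / 2 <
      #((extC0Edges fst snd col M t).filter
        fun f => (endpts fst snd f ∩ endpts fst snd e).Nonempty) := by
  set A := extC0Edges fst snd col M t
  have hfew : (#(A.filter fun f => ¬ (endpts fst snd f ∩ endpts fst snd e).Nonempty) : ℝ) <
      α * #(C0 col M) / 2 := by
    simp only [IsGood, not_and, not_exists, not_le] at hbad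
    refine lt_of_le_of_lt ?_ (hbad he heF g hg hce)
    refine Nat.cast_le.2 (card_le_card fun f hf => ?_)
    obtain ⟨hfA, hfe⟩ := mem_filter.1 hf
    obtain ⟨-, hfext, hfC0, htf⟩ := mem_filter.1 hfA
    exact mem_filter.2 ⟨mem_univ f, hfext, hfC0, ⟨t, mem_inter.2 ⟨htf, htg⟩⟩,
      not_nonempty_iff_eq_empty.1 hfe⟩
  have hsplit := card_filter_add_card_filter_not
    (s := A) (p := fun f => (endpts fst snd f ∩ endpts fst snd e).Nonempty)
  have hA : (extC0deg fst snd col M t : ℝ) = #A := rfl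
  rw [← hsplit] at hA
  push_cast at hA
  linarith

theorem IsProperColouring.card_mul_le_card_C0 (h : IsProperColouring fst snd col)
    {M B : Finset E} {c : C} {t : V} {a : ℝ}
    (hB : ∀ e ∈ B, col e = c ∧ t ∉ endpts fst snd e)
    (hmany : ∀ e ∈ B, a < #((extC0Edges fst snd col M t).filter
      fun f => (endpts fst snd f ∩ endpts fst snd e).Nonempty)) :
    #B * a ≤ #(C0 col M) := by
  have hcount := card_nsmul_le_card_nsmul (R := ℝ) (s := B) (t := extC0Edges fst snd col M t)
    (m := a) (n := 1) (fun e f => (endpts fst snd f ∩ endpts fst snd e).Nonempty)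
    (fun e he => (hmany e he).le) fun f hf => by
      -- an edge of colour `c` meeting `f` but avoiding `t` contains the other end of `f`
      have htf := (mem_filter.1 hf).2.2.2
      refine Nat.cast_le_one.2 (Finset.card_le_one.2 fun e₁ he₁ e₂ he₂ => ?_)
      obtain ⟨he₁B, v₁, hv₁⟩ := (mem_bipartiteBelow _).1 he₁
      obtain ⟨he₂B, v₂, hv₂⟩ := (mem_bipartiteBelow _).1 he₂
      rw [mem_inter] at hv₁ hv₂
      have hv₁₂ : v₁ = v₂ := eq_of_mem_endpts_of_ne htf hv₁.1 hv₂.1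
        (fun h => (hB e₁ he₁B).2 (h ▸ hv₁.2)) fun h => (hB e₂ he₂B).2 (h ▸ hv₂.2)
      exact h.eq_of_mem_endpts ((hB e₁ he₁B).1.trans (hB e₂ he₂B).1.symm) hv₁.2
        (hv₁₂ ▸ hv₂.2)
  simp only [nsmul_eq_mul, mul_one] at hcount
  exact hcount.trans (by exact_mod_cast h.card_extC0Edges_le M t)

theorem IsMaximumRainbowMatching.card_filter_col_eq_le {M : Finset E}
    (hM : IsMaximumRainbowMatching fst snd col M) (hproper : IsProperColouring fst snd col)
    (hloop : ∀ e : E, fst e ≠ snd e) {α : ℝ} (hα : 0 < α) (hC0 : 0 < #(C0 col M)) {c : C}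
    (hc : c ∈ Fcols fst snd col M α) :
    (#(univ.filter fun e : E => col e = c) : ℝ) ≤
      #M + 2 + 2 / α + #((univ.filter fun e : E => IsGood fst snd col M α e).filter
        fun e => col e = c) := by
  obtain ⟨g, hgE0, rfl⟩ := mem_image.1 hc
  obtain ⟨hg, t, htg, hdeg⟩ := mem_filter.1 hgE0
  obtain ⟨f, hf⟩ : (extC0Edges fst snd col M t).Nonempty := by
    have : (0 : ℝ) < α * #(C0 col M) := by positivity
    exact card_pos.1 (by exact_mod_cast this.trans_le hdeg)
  set T := univ.filter fun e : E => col e = col g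
  have hT : ∀ {p : E → Prop} [DecidablePred p] e, e ∈ T.filter p → col e = col g ∧ p e :=
    fun e he => by simpa only [T, mem_filter, mem_univ, true_and] using he
  set Ic := T.filter fun e => endpts fst snd e ⊆ mVerts fst snd M
  set Oc := T.filter fun e => Disjoint (endpts fst snd e) (mVerts fst snd M)
  set B₁ := T.filter fun e => t ∈ endpts fst snd e
  set B₂ := T.filter fun e =>
    IsExternal fst snd M e ∧ ¬ IsGood fst snd col M α e ∧ t ∉ endpts fst snd e
  set G := (univ.filter fun e : E => IsGood fst snd col M α e).filter fun e => col e = col g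
  have hcover : T ⊆ Ic ∪ Oc ∪ B₁ ∪ B₂ ∪ G := by
    intro e he
    have := subset_or_disjoint_of_not_isExternal (fst := fst) (snd := snd) (M := M) (e := e)
    simp only [T, Ic, Oc, B₁, B₂, G, mem_union, mem_filter, mem_univ, true_and] at he ⊢
    tauto
  have hIc : (#Ic : ℝ) ≤ #M := by exact_mod_cast hproper.card_le_card_of_subset_mVerts hloop hT
  have hOc : (#Oc : ℝ) ≤ 1 := by
    exact_mod_cast hM.card_le_one_of_disjoint_mVerts hproper hg htg hf hT
  have hB₁ : (#B₁ : ℝ) ≤ 1 := by exact_mod_cast hproper.card_le_one hT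
  have hB₂ : (#B₂ : ℝ) ≤ 2 / α := by
    have hmul := hproper.card_mul_le_card_C0 (B := B₂)
      (fun e he => ⟨(hT e he).1, (hT e he).2.2.2⟩) fun e he =>
        lt_card_filter_of_not_isGood hg htg (hT e he).1.symm hdeg (hT e he).2.1
          ((hT e he).1 ▸ hc) (hT e he).2.2.1
    have hC0' : (0 : ℝ) < #(C0 col M) := by exact_mod_cast hC0
    rw [le_div_iff₀ hα]
    nlinarith
  have hsum : #T ≤ #Ic + #Oc + #B₁ + #B₂ + #G := by
    grw [card_le_card hcover, card_union_le, card_union_le, card_union_le, card_union_le]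
  have hsumℝ : (#T : ℝ) ≤ #Ic + #Oc + #B₁ + #B₂ + #G := by exact_mod_cast hsum
  linarith

end Multigraph

theorem stmt7_general
    {V E C : Type*} [DecidableEq V] [Fintype E]
    [Fintype C] [DecidableEq C]
    (ε k α : ℝ) (hε0 : 0 < ε) (hε1 : ε < 1/1000)
    (hk : k = (2:ℝ) ^ (20/ε)) (hα : α = ε/12)
    (n : ℕ)
    (fst snd : E → V) (col : E → C)
    (hloop : ∀ e : E, fst e ≠ snd e)
    (hproper : ∀ e f : E, e ≠ f → (endpts fst snd e ∩ endpts fst snd f).Nonempty →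
      col e ≠ col f)
    (hC : Fintype.card C = n)
    (habund : ∀ c : C, (1+ε) * n ≤ ((Finset.univ.filter fun e : E => col e = c).card : ℝ))
    (M : Finset E) (hM : IsRainbowMatching fst snd col M)
    (hMmax : ∀ S : Finset E, IsRainbowMatching fst snd col S → S.card ≤ M.card)
    (hMlt : (M.card : ℝ) < n - k)
    :
    ε * ((Fcols fst snd col M α).card : ℝ) * n / 4 ≤
      ((Finset.univ.filter fun e : E => IsGood fst snd col M α e).card : ℝ) := by
  have hα0 : 0 < α := by rw [hα]; positivity
  have hk' : 2 + 24 / ε ≤ k := by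
    have := two_add_mul_le_two_rpow (x := 20 / ε) (by rw [le_div_iff₀ hε0]; linarith)
    rw [hk]
    convert this using 2
    ring
  have hC0 : (n : ℝ) ≤ #(C0 col M) + #M := by
    exact_mod_cast hC ▸ card_le_card_C0_add_card col M
  have hC0pos : 0 < #(C0 col M) := by
    have : 0 < 24 / ε := by positivity
    exact_mod_cast (by linarith : (0 : ℝ) < #(C0 col M))
  have hcolour : ∀ c ∈ Fcols fst snd col M α, ε * n / 4 ≤
      (#((univ.filter fun e : E => IsGood fst snd col M α e).filter
        fun e => col e = c) : ℝ) := by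
    intro c hc
    have hbound :=
      IsMaximumRainbowMatching.card_filter_col_eq_le ⟨hM, hMmax⟩ hproper hloop hα0 hC0pos hc
    have h2α : 2 / α = 24 / ε := by rw [hα]; field_simp; norm_num
    have := habund c
    have : 0 ≤ ε * n := by positivity
    linarith
  have hmaps : ((univ.filter fun e : E => IsGood fst snd col M α e) : Set E).MapsTo col
      (Fcols fst snd col M α) := fun e he => (mem_filter.1 he).2.2.1
  rw [card_eq_sum_card_fiberwise hmaps, Nat.cast_sum]
  calc ε * #(Fcols fst snd col M α) * n / 4 = #(Fcols fst snd col M α) • (ε * n / 4) := by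
        rw [nsmul_eq_mul]; ring
    _ ≤ _ := card_nsmul_le_sum _ _ _ hcolour

/-- At least `ε|F|n/4` of the external `F`-edges are good. -/
theorem stmt7
    {V E C : Type*} [Fintype V] [DecidableEq V] [Fintype E] [DecidableEq E]
    [Fintype C] [DecidableEq C]
    (ε k α : ℝ) (hε0 : 0 < ε) (hε1 : ε < 1/1000)
    (hk : k = (2:ℝ) ^ (20/ε)) (hα : α = ε/12)
    (n : ℕ) (hn : (n:ℝ) > k^2)
    (fst snd : E → V) (col : E → C)
    (hloop : ∀ e : E, fst e ≠ snd e)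
    (hproper : ∀ e f : E, e ≠ f → (endpts fst snd e ∩ endpts fst snd f).Nonempty →
      col e ≠ col f)
    (hC : Fintype.card C = n)
    (hmult : ∀ u v : V,
      ((Finset.univ.filter fun e : E => endpts fst snd e = ({u, v} : Finset V)).card : ℝ) ≤ n / k)
    (habund : ∀ c : C, (1+ε) * n ≤ ((Finset.univ.filter fun e : E => col e = c).card : ℝ))
    (M : Finset E) (hM : IsRainbowMatching fst snd col M)
    (hMmax : ∀ S : Finset E, IsRainbowMatching fst snd col S → S.card ≤ M.card)
    (hMlt : (M.card : ℝ) < n - k)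
    :
    ε * ((Fcols fst snd col M α).card : ℝ) * n / 4 ≤
      ((Finset.univ.filter fun e : E => IsGood fst snd col M α e).card : ℝ) :=
  stmt7_general ε k α hε0 hε1 hk hα n fst snd col hloop hproper hC habund M hM hMmax hMlt
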